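/- Define φ : [0,∞) × ℝ → ℝ by φ(t,x) = −(x − t/2 − t²)²/(1 + 4t), and ϱ(t) = t/2 + t². Then: (i) for every t > 0 and x ∈ ℝ, φ is differentiable with ∂t φ(t,x) = x − ϱ(t) + (∂x φ(t,x))²; (ii) for every t ≥ 0, max_{x∈ℝ} φ(t,x) = 0, and this maximum is attained exactly at the single point x = ϱ(t) = t/2 + t²; (iii) φ(0,x) = −x². -/

import Mathlib

/-- The explicit solution of the constrained Hamilton–Jacobi problem of Section 6.1. -/
noncomputable def phiEx (t x : ℝ) : ℝ := -(x - t / 2 - t ^ 2) ^ 2 / (1 + 4 * t)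

/-- The associated Lagrange multiplier / concentration point. -/
noncomputable def rhoEx (t : ℝ) : ℝ := t / 2 + t ^ 2

/-!
`φ(t, ·)` is the downward parabola `-(x - ϱ(t))² / (1 + 4t)` with vertex at `ϱ(t)`, so the
constraint `max φ(t, ·) = 0` and `ϱ = x̄` are immediate. For the equation, write `u = x - ϱ(t)`:
since `ϱ' = (1 + 4t) / 2`, differentiating in `t` gives `∂t φ = u + 4u² / (1 + 4t)²`, while
`∂x φ = -2u / (1 + 4t)`, whose square is exactly the second term.
-/

lemma phiEx_eq (t x : ℝ) : phiEx t x = -(x - rhoEx t) ^ 2 / (1 + 4 * t) := by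
  rw [phiEx, rhoEx, sub_add_eq_sub_sub]

lemma phiEx_zero_left (x : ℝ) : phiEx 0 x = -x ^ 2 := by
  simp [phiEx]

lemma phiEx_rhoEx (t : ℝ) : phiEx t (rhoEx t) = 0 := by
  simp [phiEx_eq]

lemma phiEx_nonpos {t : ℝ} (ht : 0 ≤ 1 + 4 * t) (x : ℝ) : phiEx t x ≤ 0 := by
  rw [phiEx_eq, neg_div]
  exact neg_nonpos.mpr (div_nonneg (sq_nonneg _) ht)

lemma phiEx_eq_zero_iff {t : ℝ} (ht : 1 + 4 * t ≠ 0) {x : ℝ} : phiEx t x = 0 ↔ x = rhoEx t := by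
  rw [phiEx_eq, div_eq_zero_iff, neg_eq_zero, sq_eq_zero_iff, sub_eq_zero]
  exact or_iff_left ht

lemma hasDerivAt_rhoEx (t : ℝ) : HasDerivAt rhoEx ((1 + 4 * t) / 2) t := by
  unfold rhoEx
  exact (((hasDerivAt_id' t).div_const 2).add ((hasDerivAt_id' t).fun_pow 2)).congr_deriv
    (by ring)

lemma hasDerivAt_phiEx_right (t x : ℝ) :
    HasDerivAt (phiEx t) (-2 * (x - rhoEx t) / (1 + 4 * t)) x := by
  rw [funext (phiEx_eq t)]
  exact ((((hasDerivAt_id' x).sub_const (rhoEx t)).fun_pow 2).fun_neg.div_const _).congr_deriv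
    (by ring)

lemma hasDerivAt_phiEx_left {t : ℝ} (ht : 1 + 4 * t ≠ 0) (x : ℝ) :
    HasDerivAt (phiEx · x) (x - rhoEx t + (2 * (x - rhoEx t) / (1 + 4 * t)) ^ 2) t := by
  have hden : HasDerivAt (fun s : ℝ => 1 + 4 * s) 4 t := by
    simpa using ((hasDerivAt_id' t).const_mul 4).const_add 1
  rw [funext (phiEx_eq · x)]
  refine ((((hasDerivAt_rhoEx t).const_sub x).fun_pow 2).fun_neg.fun_div hden ht).congr_deriv ?_
  field_simp
  ring

/-- explicit solution of the constrained Hamilton–Jacobi problem of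
Section 6.1 of the paper: `φ(t,x) = −(x − t/2 − t²)²/(1+4t)` solves
`∂t φ = x − ϱ(t) + (∂x φ)²` for `t > 0`, satisfies `max_x φ(t,·) = 0` attained exactly
at `x = ϱ(t) = t/2 + t²`, and `φ(0,x) = −x²`. -/
theorem explicit_constrained_solution :
    (∀ t > (0 : ℝ), ∀ x : ℝ,
      DifferentiableAt ℝ (fun s => phiEx s x) t ∧
      DifferentiableAt ℝ (fun y => phiEx t y) x ∧
      deriv (fun s => phiEx s x) t = x - rhoEx t + (deriv (fun y => phiEx t y) x) ^ 2) ∧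
    (∀ t ≥ (0 : ℝ),
      (∀ x : ℝ, phiEx t x ≤ 0) ∧ phiEx t (rhoEx t) = 0 ∧
      ∀ x : ℝ, phiEx t x = 0 → x = rhoEx t) ∧
    (∀ x : ℝ, phiEx 0 x = -x ^ 2) := by
  refine ⟨fun t ht x => ?_, fun t ht => ?_, phiEx_zero_left⟩
  · have hdt := hasDerivAt_phiEx_left (by positivity : 1 + 4 * t ≠ 0) x
    have hdx := hasDerivAt_phiEx_right t x
    refine ⟨hdt.differentiableAt, hdx.differentiableAt, ?_⟩
    rw [hdt.deriv, hdx.deriv, neg_mul, neg_div, neg_sq]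
  · have hpos : 0 < 1 + 4 * t := by positivity
    exact ⟨phiEx_nonpos hpos.le, phiEx_rhoEx t, fun x => (phiEx_eq_zero_iff hpos.ne').mp⟩
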